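/- arXiv:2206.10787 — 7 statements merged into one kernel-verified Lean document; each statement's English description precedes it below -/
import Mathlib

section
/- (Stein's lemma with baseline) Let σ > 0, let ρ be the Gaussian measure on ℝ with mean 0 and variance σ², and let f : ℝ → ℝ be bounded and Lipschitz continuous. Then for every x̄ ∈ ℝ and every constant b ∈ ℝ, the derivative of the smooth surrogate f_ρ(x) := ∫ f(x+w) dρ(w) at x̄ satisfies f_ρ'(x̄) = ∫ (f(x̄ + w) - b) · (w/σ²) dρ(w). In particular the value of the baseline b has no effect on the right-hand side. -/
open MeasureTheory ProbabilityTheory Real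

lemma gauss_integral_eq (v : NNReal) (hv : v ≠ 0) (h : ℝ → ℝ) :
    ∫ w, h w ∂(gaussianReal 0 v) = ∫ w, gaussianPDFReal 0 v w * h w := by
  rw [gaussianReal_of_var_ne_zero _ hv]
  have h1 : gaussianPDF 0 v = fun w => ((gaussianPDFReal 0 v w).toNNReal : ENNReal) := rfl
  rw [h1, integral_withDensity_eq_integral_smul
    ((measurable_gaussianPDFReal 0 v).real_toNNReal)]
  congr 1
  ext w
  simp [NNReal.smul_def, Real.coe_toNNReal _ (gaussianPDFReal_nonneg 0 v w)]

lemma gauss_pdf_eq (v : NNReal) (t : ℝ) :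
    gaussianPDFReal 0 v t = (Real.sqrt (2 * π * v))⁻¹ * rexp (-t ^ 2 / (2 * v)) := by
  simp [gaussianPDFReal]

lemma gauss_even (v : NNReal) (t : ℝ) :
    gaussianPDFReal 0 v (-t) = gaussianPDFReal 0 v t := by
  simp [gaussianPDFReal]

lemma key_bound {v : ℝ} (hv : 0 < v) (t : ℝ) :
    |t| * rexp (-t ^ 2 / (2 * v)) ≤ Real.sqrt (2 * v) * rexp (-(1/(4*v)) * t ^ 2) := by
  have h2 : -t ^ 2 / (2 * v) = -(1/(4*v)) * t ^ 2 + -t ^ 2 / (4 * v) := by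
    field_simp; ring
  rw [h2, Real.exp_add, ← mul_assoc, mul_comm (|t|)]
  rw [mul_comm (Real.sqrt (2*v)), mul_assoc]
  refine mul_le_mul_of_nonneg_left ?_ (Real.exp_nonneg _)
  set a := Real.sqrt (2*v) with ha_def
  have ha : 0 < a := Real.sqrt_pos.mpr (by linarith)
  have ha2 : a ^ 2 = 2 * v := Real.sq_sqrt (by linarith)
  have h4v : (0:ℝ) < 4 * v := by linarith
  have key : |t| * (4 * v) ≤ (t ^ 2 + 4 * v) * a := by
    nlinarith [mul_nonneg ha.le (sq_nonneg (|t| - a)), sq_abs t,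
      mul_pos ha (mul_pos ha ha)]
  have h5 : |t| ≤ a * rexp (t ^ 2 / (4 * v)) := by
    calc |t| ≤ (t ^ 2 + 4 * v) * a / (4 * v) := (le_div_iff₀ h4v).mpr (by linarith [key])
      _ = a * (t ^ 2 / (4 * v) + 1) := by field_simp
      _ ≤ a * rexp (t ^ 2 / (4 * v)) :=
          mul_le_mul_of_nonneg_left (Real.add_one_le_exp _) ha.le
  have h6 : -t ^ 2 / (4 * v) = -(t ^ 2 / (4 * v)) := by ring
  rw [h6, Real.exp_neg]
  rw [mul_inv_le_iff₀' (Real.exp_pos _)]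
  linarith [h5, mul_comm a (rexp (t ^ 2 / (4 * v)))]

/-- pdf times |t| is bounded by an integrable gaussian envelope. -/
lemma gauss_mul_abs_le (v : NNReal) (hv : 0 < (v:ℝ)) (t : ℝ) :
    gaussianPDFReal 0 v t * |t|
      ≤ (Real.sqrt (2 * π * v))⁻¹ * Real.sqrt (2 * v) * rexp (-(1/(4*(v:ℝ))) * t ^ 2) := by
  rw [gauss_pdf_eq]
  calc (Real.sqrt (2 * π * v))⁻¹ * rexp (-t ^ 2 / (2 * v)) * |t|
      = (Real.sqrt (2 * π * v))⁻¹ * (|t| * rexp (-t ^ 2 / (2 * v))) := by ring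
    _ ≤ (Real.sqrt (2 * π * v))⁻¹ * (Real.sqrt (2 * v) * rexp (-(1/(4*(v:ℝ))) * t ^ 2)) :=
        mul_le_mul_of_nonneg_left (key_bound hv t) (by positivity)
    _ = (Real.sqrt (2 * π * v))⁻¹ * Real.sqrt (2 * v) * rexp (-(1/(4*(v:ℝ))) * t ^ 2) := by
        ring

/-- Stein's lemma with baseline: for the Gaussian measure `ρ` on `ℝ`
with mean `0` and variance `σ²`, and `f` bounded and Lipschitz, the derivative of
the smooth surrogate `f_ρ(x) = ∫ f (x + w) ∂ρ` at `x̄` equals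
`∫ (f (x̄ + w) - b) * (w / σ²) ∂ρ` for every baseline `b`. -/
theorem stein_lemma_with_baseline
    (σ : NNReal) (hσ : 0 < σ)
    (f : ℝ → ℝ) (C : ℝ) (hfb : ∀ x, |f x| ≤ C) (K : NNReal) (hfl : LipschitzWith K f)
    (xbar b : ℝ) :
    deriv (fun x : ℝ => ∫ w : ℝ, f (x + w) ∂(gaussianReal 0 (σ ^ 2))) xbar
      = ∫ w : ℝ, (f (xbar + w) - b) * (w / (σ : ℝ) ^ 2) ∂(gaussianReal 0 (σ ^ 2)) := by
  set v : NNReal := σ ^ 2 with hvdef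
  have hv : v ≠ 0 := pow_ne_zero 2 hσ.ne'
  have hvR : (0:ℝ) < (v:ℝ) := by
    have : (0:ℝ) < (σ:ℝ) := hσ
    simp only [hvdef, NNReal.coe_pow]
    positivity
  have hcast : ((σ:ℝ)) ^ 2 = ((v:ℝ)) := by simp [hvdef]
  have hvne : ((v:ℝ)) ≠ 0 := ne_of_gt (by
    have : (0:ℝ) < (σ:ℝ) := hσ
    simp only [hvdef, NNReal.coe_pow]
    positivity)
  set g : ℝ → ℝ := gaussianPDFReal 0 v with hgdef
  have hC : 0 ≤ C := le_trans (abs_nonneg _) (hfb 0)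
  set c : ℝ := (Real.sqrt (2 * π * v))⁻¹ with hcdef
  have hc : 0 ≤ c := by positivity
  have hgc : Continuous g := by
    have : g = fun t => c * rexp (-t ^ 2 / (2 * v)) := funext (gauss_pdf_eq v)
    rw [this]; fun_prop
  have hfc : Continuous f := hfl.continuous
  have hgnn : ∀ t, 0 ≤ g t := gaussianPDFReal_nonneg 0 v
  -- derivative of x ↦ g (u - x)
  have hderiv : ∀ (u x : ℝ), HasDerivAt (fun x => g (u - x)) ((u - x) / v * g (u - x)) x := by
    intro u x
    have h0 : HasDerivAt (fun x : ℝ => u - x) (-1) x := (hasDerivAt_id x).const_sub u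
    have h1 : HasDerivAt (fun x : ℝ => -(u - x) ^ 2 / (2 * (v:ℝ)))
        (-(2 * (u - x) ^ 1 * (-1)) / (2 * (v:ℝ))) x := ((h0.pow 2).neg).div_const _
    have h2 := (h1.exp).const_mul c
    have hrepr : (fun x => g (u - x)) = fun x => c * rexp (-(u - x) ^ 2 / (2 * (v:ℝ))) :=
      funext fun x => gauss_pdf_eq v (u - x)
    rw [hrepr]
    convert h2 using 1
    · rfl
    · rfl
    have hDe : -(2 * (u - x) ^ 1 * (-1 : ℝ)) / (2 * (v:ℝ)) = (u - x) / (v:ℝ) := by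
      field_simp
    rw [hDe, hgdef, gauss_pdf_eq, hcdef]
    ring
  -- translation representation of the surrogate
  have hFrepr : ∀ x : ℝ, ∫ w, f (x + w) ∂(gaussianReal 0 v) = ∫ u, g (u - x) * f u := by
    intro x
    rw [gauss_integral_eq v hv]
    have ht := MeasureTheory.integral_add_right_eq_self (μ := volume)
      (fun u => g (u - x) * f u) x
    rw [← ht]
    congr 1
    funext w
    rw [add_sub_cancel_right, add_comm x w]
  -- envelope integrability
  have h8v : (0:ℝ) < 1 / (8 * (v:ℝ)) := by positivity
  have h4v : (0:ℝ) < 1 / (4 * (v:ℝ)) := by positivity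
  set B : ℝ := C / v * (c * Real.sqrt (2 * v) * rexp (1 / (4 * (v:ℝ)))) with hBdef
  have hB : 0 ≤ B := by positivity
  set bound : ℝ → ℝ := fun u => B * rexp (-(1/(8*(v:ℝ))) * (u - xbar) ^ 2) with hbdef
  have hbound_int : Integrable bound := by
    exact ((integrable_exp_neg_mul_sq h8v).comp_sub_right xbar).const_mul B
  -- the pointwise bound on the derivative integrand
  have hptbound : ∀ u : ℝ, ∀ x ∈ Metric.ball xbar 1,
      ‖((u - x) / v * g (u - x)) * f u‖ ≤ bound u := by
    intro u x hx
    have hxx : |x - xbar| < 1 := by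
      rw [Metric.mem_ball, Real.dist_eq] at hx; exact hx
    have step1 : ‖((u - x) / v * g (u - x)) * f u‖
        ≤ (g (u - x) * |u - x|) * C / v := by
      rw [norm_mul, norm_mul, norm_div]
      simp only [Real.norm_eq_abs]
      rw [abs_of_nonneg (hgnn _), abs_of_nonneg hvR.le]
      refine le_trans (mul_le_mul_of_nonneg_left (hfb u)
        (mul_nonneg (by positivity) (hgnn _))) (le_of_eq ?_)
      ring
    have step2 : g (u - x) * |u - x| ≤ c * Real.sqrt (2 * v)
        * rexp (-(1/(4*(v:ℝ))) * (u - x) ^ 2) := by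
      have := gauss_mul_abs_le v hvR (u - x)
      simpa [hcdef, mul_assoc] using this
    have step3 : rexp (-(1/(4*(v:ℝ))) * (u - x) ^ 2)
        ≤ rexp (1 / (4 * (v:ℝ))) * rexp (-(1/(8*(v:ℝ))) * (u - xbar) ^ 2) := by
      rw [← Real.exp_add, Real.exp_le_exp]
      have hsq : (u - xbar) ^ 2 ≤ 2 * (u - x) ^ 2 + 2 * (x - xbar) ^ 2 := by
        nlinarith [sq_nonneg ((u - x) - (x - xbar))]
      have hsx : (x - xbar) ^ 2 ≤ 1 := by
        nlinarith [abs_nonneg (x - xbar), sq_abs (x - xbar)]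
      have he : (1/(8*(v:ℝ))) * (2 * (u - x) ^ 2 + 2 * (x - xbar) ^ 2)
          = (1/(4*(v:ℝ))) * (u - x) ^ 2 + (1/(4*(v:ℝ))) * (x - xbar) ^ 2 := by
        field_simp; ring
      have h1 : (1/(8*(v:ℝ))) * (u - xbar) ^ 2
          ≤ (1/(4*(v:ℝ))) * (u - x) ^ 2 + (1/(4*(v:ℝ))) * (x - xbar) ^ 2 := by
        calc (1/(8*(v:ℝ))) * (u - xbar) ^ 2
            ≤ (1/(8*(v:ℝ))) * (2 * (u - x) ^ 2 + 2 * (x - xbar) ^ 2) := by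
              exact mul_le_mul_of_nonneg_left hsq (by positivity)
          _ = _ := he
      have h2 : (1/(4*(v:ℝ))) * (x - xbar) ^ 2 ≤ 1 / (4 * (v:ℝ)) := by
        calc (1/(4*(v:ℝ))) * (x - xbar) ^ 2 ≤ (1/(4*(v:ℝ))) * 1 :=
            mul_le_mul_of_nonneg_left hsx (by positivity)
          _ = 1 / (4 * (v:ℝ)) := mul_one _
      linarith
    calc ‖((u - x) / v * g (u - x)) * f u‖
        ≤ (g (u - x) * |u - x|) * C / v := step1
      _ ≤ (c * Real.sqrt (2 * v) * rexp (-(1/(4*(v:ℝ))) * (u - x) ^ 2)) * C / v := by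
          gcongr
      _ ≤ (c * Real.sqrt (2 * v) * (rexp (1 / (4 * (v:ℝ)))
            * rexp (-(1/(8*(v:ℝ))) * (u - xbar) ^ 2))) * C / v := by
          gcongr
      _ = bound u := by rw [hbdef, hBdef]; ring
  -- dominated differentiation
  have hmain := hasDerivAt_integral_of_dominated_loc_of_deriv_le (μ := volume)
    (F := fun x u => g (u - x) * f u)
    (F' := fun x u => ((u - x) / v * g (u - x)) * f u)
    (x₀ := xbar) (bound := bound) (Metric.ball_mem_nhds xbar one_pos)
    (Filter.Eventually.of_forall fun x =>
      (((hgc.comp (continuous_id.sub continuous_const)).mul hfc)).aestronglyMeasurable)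
    (by -- Integrable (fun u => g (u - xbar) * f u)
      refine Integrable.mono' (((integrable_gaussianPDFReal 0 v).comp_sub_right xbar).const_mul C)
        (((hgc.comp (continuous_id.sub continuous_const)).mul hfc)).aestronglyMeasurable
        (Filter.Eventually.of_forall fun u => ?_)
      rw [norm_mul, Real.norm_eq_abs, Real.norm_eq_abs, abs_of_nonneg (hgnn _)]
      calc g (u - xbar) * |f u| ≤ g (u - xbar) * C :=
          mul_le_mul_of_nonneg_left (hfb u) (hgnn _)
        _ = C * g (u - xbar) := mul_comm _ _)
    (((((continuous_id.sub continuous_const).div_const _).mul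
        (hgc.comp (continuous_id.sub continuous_const))).mul hfc).aestronglyMeasurable)
    (Filter.Eventually.of_forall hptbound) hbound_int
    (Filter.Eventually.of_forall fun u x _ => (hderiv u x).mul_const (f u))
  obtain ⟨-, hD⟩ := hmain
  -- integrability facts for the RHS
  have hI2meas : Continuous (fun w => g w * w) := hgc.mul continuous_id
  have henv_int : Integrable (fun t => rexp (-(1/(4*(v:ℝ))) * t ^ 2)) :=
    integrable_exp_neg_mul_sq h4v
  have habs2' : ∀ w : ℝ, g w * |w| ≤ (c * Real.sqrt (2 * v))
      * rexp (-(1/(4*(v:ℝ))) * w ^ 2) := by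
    intro w
    have := gauss_mul_abs_le v hvR w
    calc g w * |w| ≤ (Real.sqrt (2 * π * v))⁻¹ * Real.sqrt (2 * v)
          * rexp (-(1/(4*(v:ℝ))) * w ^ 2) := this
      _ = (c * Real.sqrt (2 * v)) * rexp (-(1/(4*(v:ℝ))) * w ^ 2) := by rw [hcdef]
  have habs2 : ∀ w : ℝ, ‖g w * w‖ ≤ (c * Real.sqrt (2 * v))
      * rexp (-(1/(4*(v:ℝ))) * w ^ 2) := by
    intro w
    rw [norm_mul, Real.norm_eq_abs, Real.norm_eq_abs, abs_of_nonneg (hgnn _)]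
    exact habs2' w
  have hI2 : Integrable (fun w => g w * w) :=
    Integrable.mono' (henv_int.const_mul _) hI2meas.aestronglyMeasurable
      (Filter.Eventually.of_forall habs2)
  have hI1 : Integrable (fun w => g w * f (xbar + w) * w) := by
    refine Integrable.mono' ((henv_int.const_mul (C * (c * Real.sqrt (2 * v)))))
      (((hgc.mul (hfc.comp (continuous_const.add continuous_id))).mul
        continuous_id).aestronglyMeasurable)
      (Filter.Eventually.of_forall fun w => ?_)
    rw [norm_mul, norm_mul, Real.norm_eq_abs, Real.norm_eq_abs, Real.norm_eq_abs,
        abs_of_nonneg (hgnn _)]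
    calc g w * |f (xbar + w)| * |w| ≤ g w * C * |w| :=
          mul_le_mul_of_nonneg_right (mul_le_mul_of_nonneg_left (hfb _) (hgnn w)) (abs_nonneg w)
      _ = C * (g w * |w|) := by ring
      _ ≤ C * (c * Real.sqrt (2 * v) * rexp (-(1/(4*(v:ℝ))) * w ^ 2)) :=
          mul_le_mul_of_nonneg_left (habs2' w) hC
      _ = C * (c * Real.sqrt (2 * v)) * rexp (-(1/(4*(v:ℝ))) * w ^ 2) := by ring
  -- the odd integral vanishes
  have hI2zero : ∫ w, g w * w = 0 := by
    have hneg := MeasureTheory.integral_neg_eq_self (μ := volume) (fun w => g w * w)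
    have hodd : (fun w => g (-w) * (-w)) = fun w => -(g w * w) := by
      funext w; rw [hgdef, gauss_even]; ring
    rw [hodd, integral_neg] at hneg
    linarith
  -- compute both sides
  have hLHSfun : (fun x : ℝ => ∫ w, f (x + w) ∂(gaussianReal 0 (σ ^ 2)))
      = fun x => ∫ u, g (u - x) * f u := funext fun x => hFrepr x
  rw [hLHSfun, hD.deriv]
  -- translate the derivative integral back
  have htrans2 : ∫ u, ((u - xbar) / v * g (u - xbar)) * f u
      = ∫ w, (w / v * g w) * f (xbar + w) := by
    have ht := MeasureTheory.integral_add_right_eq_self (μ := volume)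
      (fun u => ((u - xbar) / v * g (u - xbar)) * f u) xbar
    rw [← ht]
    congr 1
    funext w
    rw [add_sub_cancel_right, add_comm xbar w]
  rw [htrans2]
  -- compute RHS
  rw [show (gaussianReal 0 (σ ^ 2)) = gaussianReal 0 v from rfl,
    gauss_integral_eq v hv, hcast]
  have hsplit : (fun w => g w * ((f (xbar + w) - b) * (w / (v:ℝ))))
      = fun w => (g w * f (xbar + w) * w) * (1 / (v:ℝ)) - (g w * w) * (b / (v:ℝ)) := by
    funext w; field_simp
  rw [hsplit, integral_sub (hI1.mul_const _) (hI2.mul_const _),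
    integral_mul_const, integral_mul_const, hI2zero]
  have : (fun w => (w / v * g w) * f (xbar + w))
      = fun w => (g w * f (xbar + w) * w) * (1 / (v:ℝ)) := by
    funext w; field_simp
  rw [this, integral_mul_const]
  ring
end

section
/- Let σ > 0, let ρ be the Gaussian measure on ℝ with mean 0 and variance σ², and let f : ℝ → ℝ be bounded and Lipschitz continuous. Fix x̄ ∈ ℝ. Then the unique minimizer (J*, μ*) ∈ ℝ × ℝ of F(J, μ) := (1/2) E_{w∼ρ}[(f(x̄+w) - J w - μ)²] is given by the exact linearization of the smooth surrogate: μ* = f_ρ(x̄) and J* = f_ρ'(x̄), where f_ρ(x) := E_{w∼ρ}[f(x+w)]. -/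
open MeasureTheory ProbabilityTheory Real

open Filter
open scoped NNReal ENNReal

lemma pdf_eq (v : ℝ≥0) (w : ℝ) : gaussianPDFReal 0 v w
    = (Real.sqrt (2*π*(v:ℝ)))⁻¹ * rexp (-(2*(v:ℝ))⁻¹ * w^2) := by
  rw [gaussianPDFReal]
  congr 1
  ring

lemma gauss_integral_eq_s4 {v : ℝ≥0} (hv : v ≠ 0) (h : ℝ → ℝ) :
    ∫ w, h w ∂(gaussianReal 0 v)
      = ∫ w, h w * ((Real.sqrt (2*π*(v:ℝ)))⁻¹ * rexp (-(2*(v:ℝ))⁻¹ * w^2)) := by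
  rw [gaussianReal_of_var_ne_zero 0 hv]
  have h1 : gaussianPDF 0 v = fun x => ((Real.toNNReal (gaussianPDFReal 0 v x) : ℝ≥0) : ℝ≥0∞) := rfl
  rw [h1, integral_withDensity_eq_integral_smul ((measurable_gaussianPDFReal 0 v).real_toNNReal) h]
  refine integral_congr_ae (ae_of_all _ fun w => ?_)
  simp only [NNReal.smul_def, smul_eq_mul]
  rw [Real.coe_toNNReal _ (gaussianPDFReal_nonneg 0 v w), pdf_eq]
  ring

lemma gauss_integrable_iff {v : ℝ≥0} (hv : v ≠ 0) (h : ℝ → ℝ) :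
    Integrable h (gaussianReal 0 v) ↔
      Integrable (fun w => h w * ((Real.sqrt (2*π*(v:ℝ)))⁻¹ * rexp (-(2*(v:ℝ))⁻¹ * w^2))) volume := by
  rw [gaussianReal_of_var_ne_zero 0 hv,
    integrable_withDensity_iff (measurable_gaussianPDF 0 v) (ae_of_all _ fun x => ENNReal.ofReal_lt_top)]
  refine integrable_congr (ae_of_all _ fun w => ?_)
  simp only [gaussianPDF_def]
  rw [ENNReal.toReal_ofReal (gaussianPDFReal_nonneg 0 v w), pdf_eq]

lemma int_x2_exp_integrable {b : ℝ} (hb : 0 < b) :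
    Integrable (fun x : ℝ => x^2 * rexp (-b * x^2)) := by
  have := integrable_rpow_mul_exp_neg_mul_sq hb (s := 2) (by norm_num)
  refine this.congr (ae_of_all _ fun x => ?_)
  simp [Real.rpow_natCast]

lemma int_x_exp {b : ℝ} (hb : 0 < b) : ∫ x : ℝ, x * rexp (-b * x^2) = 0 := by
  refine integral_eq_zero_of_hasDerivAt_of_integrable
    (f := fun x => -(2*b)⁻¹ * rexp (-b * x^2)) (fun x => ?_)
    (integrable_mul_exp_neg_mul_sq hb)
    ((integrable_exp_neg_mul_sq hb).const_mul _)
  have h := (((hasDerivAt_pow 2 x).const_mul (-b)).exp).const_mul (-(2*b)⁻¹)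
  convert h using 1
  · rfl
  field_simp
  ring

lemma int_x2_exp {b : ℝ} (hb : 0 < b) :
    ∫ x : ℝ, x^2 * rexp (-b * x^2) = Real.sqrt (π/b) / (2*b) := by
  have hint : Integrable (fun x : ℝ => rexp (-b * x^2) + (-(2*b)) * (x^2 * rexp (-b * x^2))) :=
    (integrable_exp_neg_mul_sq hb).add ((int_x2_exp_integrable hb).const_mul _)
  have h0 : ∫ x : ℝ, (rexp (-b * x^2) + (-(2*b)) * (x^2 * rexp (-b * x^2))) = 0 := by
    refine integral_eq_zero_of_hasDerivAt_of_integrable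
      (f := fun x => x * rexp (-b * x^2)) (fun x => ?_) hint (integrable_mul_exp_neg_mul_sq hb)
    have h := (hasDerivAt_id x).mul (((hasDerivAt_pow 2 x).const_mul (-b)).exp)
    convert h using 1
    · rfl
    · rfl
    simp
    ring
  rw [integral_add (integrable_exp_neg_mul_sq hb) ((int_x2_exp_integrable hb).const_mul _),
    integral_const_mul, integral_gaussian] at h0
  have hb' : (2*b) ≠ 0 := by positivity
  field_simp at h0 ⊢
  linarith

lemma surrogate_hasDerivAt {v : ℝ≥0} (hv : v ≠ 0) {f : ℝ → ℝ} {C : ℝ} (hfb : ∀ x, |f x| ≤ C)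
    (hfc : Continuous f) (xbar : ℝ) :
    HasDerivAt (fun x => ∫ w, f (x + w) ∂(gaussianReal 0 v))
      (((v:ℝ))⁻¹ * ∫ w, f (xbar + w) * w ∂(gaussianReal 0 v)) xbar := by
  have hv0 : 0 < (v:ℝ) := NNReal.coe_pos.mpr (pos_iff_ne_zero.mpr hv)
  have hC : 0 ≤ C := (abs_nonneg _).trans (hfb 0)
  set b : ℝ := (2*(v:ℝ))⁻¹ with hbdef
  have hb : 0 < b := by rw [hbdef]; positivity
  set Kc : ℝ := (Real.sqrt (2*π*(v:ℝ)))⁻¹ with hKdef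
  have hKc : 0 ≤ Kc := by rw [hKdef]; positivity
  have hcont : ∀ x : ℝ, Continuous fun u : ℝ => f u * (Kc * rexp (-b * (u - x)^2)) := fun x =>
    hfc.mul (continuous_const.mul (Real.continuous_exp.comp
      (continuous_const.mul ((continuous_id.sub continuous_const).pow 2))))
  have hcont' : Continuous fun u : ℝ => f u * ((u - xbar) / (v:ℝ) * (Kc * rexp (-b * (u - xbar)^2))) :=
    hfc.mul (((continuous_id.sub continuous_const).div_const _).mul
      (continuous_const.mul (Real.continuous_exp.comp
        (continuous_const.mul ((continuous_id.sub continuous_const).pow 2)))))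
  have hb2 : 0 < b/2 := by positivity
  -- integrable bound
  have base : Integrable (fun y : ℝ => |y| * rexp (-(b/2)*y^2) + rexp (-(b/2)*y^2)) :=
    ((integrable_mul_exp_neg_mul_sq hb2).abs.congr (ae_of_all _ fun y => by
      simp only []
      rw [abs_mul, abs_of_pos (Real.exp_pos _)])).add (integrable_exp_neg_mul_sq hb2)
  have boundint : Integrable (fun u : ℝ =>
      C * ((|u - xbar| + 1) / (v:ℝ) * (Kc * (rexp ((v:ℝ)⁻¹) * rexp (-(b/2) * (u - xbar)^2))))) :=
    ((base.comp_sub_right xbar).const_mul (C * Kc * rexp ((v:ℝ)⁻¹) / (v:ℝ))).congr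
      (ae_of_all _ fun u => by ring)
  have key := hasDerivAt_integral_of_dominated_loc_of_deriv_le (μ := volume) (x₀ := xbar)
    (s := Metric.ball xbar 1)
    (F := fun x u => f u * (Kc * rexp (-b * (u - x)^2)))
    (F' := fun x u => f u * ((u - x) / (v:ℝ) * (Kc * rexp (-b * (u - x)^2))))
    (bound := fun u => C * ((|u - xbar| + 1) / (v:ℝ) *
      (Kc * (rexp ((v:ℝ)⁻¹) * rexp (-(b/2) * (u - xbar)^2)))))
    (Metric.ball_mem_nhds xbar one_pos)
    (Eventually.of_forall fun x => (hcont x).aestronglyMeasurable)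
    (by
      refine Integrable.mono' ((((integrable_exp_neg_mul_sq hb).const_mul Kc).comp_sub_right
        xbar).const_mul C) ((hcont xbar).aestronglyMeasurable) (ae_of_all _ fun u => ?_)
      rw [Real.norm_eq_abs, abs_mul, abs_mul, abs_of_nonneg hKc, abs_of_pos (Real.exp_pos _)]
      exact mul_le_mul_of_nonneg_right (hfb u) (mul_nonneg hKc (Real.exp_pos _).le))
    hcont'.aestronglyMeasurable
    (ae_of_all _ fun u x hx => by
      rw [Metric.mem_ball, Real.dist_eq] at hx
      have habs : |(u - xbar) - (u - x)| < 1 := by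
        rw [show (u - xbar) - (u - x) = x - xbar by ring]; exact hx
      have habs2 : |(u - x) - (u - xbar)| < 1 := by
        rw [show (u - x) - (u - xbar) = -(x - xbar) by ring, abs_neg]; exact hx
      have hs_le : |u - xbar| ≤ |u - x| + 1 := by
        have h1 := abs_sub_abs_le_abs_sub (u - xbar) (u - x)
        linarith
      have ht_le : |u - x| ≤ |u - xbar| + 1 := by
        have h1 := abs_sub_abs_le_abs_sub (u - x) (u - xbar)
        linarith
      have hx2 : (u - xbar)^2 - 2*|u - xbar| ≤ (u - x)^2 := by
        nlinarith [mul_nonneg (sub_nonneg.mpr hs_le) (abs_nonneg (u - xbar)),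
          sq_nonneg (|u - x| - |u - xbar|), sq_abs (u - x), sq_abs (u - xbar),
          abs_nonneg (u - x), abs_nonneg (u - xbar)]
      have hvb : (v:ℝ)⁻¹ = 2*b := by rw [hbdef, mul_inv]; ring
      have hexp : rexp (-b * (u - x)^2) ≤ rexp ((v:ℝ)⁻¹) * rexp (-(b/2) * (u - xbar)^2) := by
        rw [← Real.exp_add]
        apply Real.exp_le_exp.mpr
        rw [hvb]
        nlinarith [mul_nonneg hb.le (sq_nonneg (|u - xbar| - 2)),
          mul_le_mul_of_nonneg_left hx2 hb.le, sq_abs (u - xbar)]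
      rw [Real.norm_eq_abs, abs_mul, abs_mul, abs_div, abs_of_pos hv0, abs_mul,
        abs_of_nonneg hKc, abs_of_pos (Real.exp_pos _)]
      refine mul_le_mul (hfb u) ?_ (by positivity) hC
      exact mul_le_mul ((div_le_div_iff_of_pos_right hv0).mpr ht_le)
        (mul_le_mul_of_nonneg_left hexp hKc)
        (mul_nonneg hKc (Real.exp_pos _).le) (by positivity))
    boundint
    (ae_of_all _ fun u x _ => by
      have h1 : HasDerivAt (fun y : ℝ => u - y) (-1) x := (hasDerivAt_id x).const_sub u
      have h4 := (((h1.pow 2).const_mul (-b)).exp.const_mul Kc).const_mul (f u)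
      convert h4 using 1
      · rfl
      · rfl
      rw [hbdef]
      simp only [Pi.pow_apply]
      field_simp
      ring)
  have hfun : (fun x : ℝ => ∫ w, f (x + w) ∂(gaussianReal 0 v))
      = fun x : ℝ => ∫ u, f u * (Kc * rexp (-b * (u - x)^2)) := by
    funext x
    rw [gauss_integral_eq_s4 hv (fun w => f (x + w)), ← hbdef, ← hKdef,
      ← integral_sub_right_eq_self (fun w => f (x + w) * (Kc * rexp (-b * w^2))) x]
    refine integral_congr_ae (ae_of_all _ fun u => ?_)
    simp only []
    congr 2
    ring
  have hval : (∫ u, f u * ((u - xbar) / (v:ℝ) * (Kc * rexp (-b * (u - xbar)^2))))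
      = ((v:ℝ))⁻¹ * ∫ w, f (xbar + w) * w ∂(gaussianReal 0 v) := by
    have e1 : (∫ u, f u * ((u - xbar) / (v:ℝ) * (Kc * rexp (-b * (u - xbar)^2))))
        = ∫ w, f (xbar + w) * (w / (v:ℝ) * (Kc * rexp (-b * w^2))) := by
      rw [← integral_sub_right_eq_self
        (fun w => f (xbar + w) * (w / (v:ℝ) * (Kc * rexp (-b * w^2)))) xbar]
      refine integral_congr_ae (ae_of_all _ fun u => ?_)
      simp only []
      rw [show xbar + (u - xbar) = u by ring]
    rw [e1, gauss_integral_eq_s4 hv (fun w => f (xbar + w) * w), ← hbdef, ← hKdef,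
      ← integral_const_mul]
    refine integral_congr_ae (ae_of_all _ fun w => ?_)
    simp only []
    ring
  rw [hfun, ← hval]
  exact key.2

section moments
variable {v : ℝ≥0} (hv : v ≠ 0)
include hv

lemma hv0' : 0 < (v:ℝ) := NNReal.coe_pos.mpr (pos_iff_ne_zero.mpr hv)
lemma hb0' : 0 < (2*(v:ℝ))⁻¹ := by have := hv0' hv; positivity

lemma gauss_m1 : ∫ w, w ∂(gaussianReal 0 v) = 0 := by
  rw [gauss_integral_eq_s4 hv (fun w => w)]
  have h2 : ∫ w : ℝ, w * ((Real.sqrt (2*π*(v:ℝ)))⁻¹ * rexp (-(2*(v:ℝ))⁻¹ * w^2))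
      = (Real.sqrt (2*π*(v:ℝ)))⁻¹ * ∫ w : ℝ, w * rexp (-(2*(v:ℝ))⁻¹ * w^2) := by
    rw [← integral_const_mul]
    exact integral_congr_ae (ae_of_all _ fun w => by ring)
  rw [h2, int_x_exp (hb0' hv), mul_zero]

lemma gauss_m2 : ∫ w, w^2 ∂(gaussianReal 0 v) = (v:ℝ) := by
  have hv0 := hv0' hv
  rw [gauss_integral_eq_s4 hv (fun w => w^2)]
  have h2 : ∫ w : ℝ, w^2 * ((Real.sqrt (2*π*(v:ℝ)))⁻¹ * rexp (-(2*(v:ℝ))⁻¹ * w^2))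
      = (Real.sqrt (2*π*(v:ℝ)))⁻¹ * ∫ w : ℝ, w^2 * rexp (-(2*(v:ℝ))⁻¹ * w^2) := by
    rw [← integral_const_mul]
    exact integral_congr_ae (ae_of_all _ fun w => by ring)
  rw [h2, int_x2_exp (hb0' hv)]
  rw [show π / (2*(v:ℝ))⁻¹ = 2*π*(v:ℝ) by rw [div_eq_mul_inv, inv_inv]; ring]
  have hs : (0:ℝ) < Real.sqrt (2*π*(v:ℝ)) := Real.sqrt_pos.mpr (by positivity)
  field_simp

lemma gauss_int_id : Integrable (fun w : ℝ => w) (gaussianReal 0 v) := by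
  rw [gauss_integrable_iff hv]
  exact ((integrable_mul_exp_neg_mul_sq (hb0' hv)).const_mul
    ((Real.sqrt (2*π*(v:ℝ)))⁻¹)).congr (ae_of_all _ fun w => by simp only []; ring)

lemma gauss_int_sq : Integrable (fun w : ℝ => w^2) (gaussianReal 0 v) := by
  rw [gauss_integrable_iff hv]
  exact ((int_x2_exp_integrable (hb0' hv)).const_mul
    ((Real.sqrt (2*π*(v:ℝ)))⁻¹)).congr (ae_of_all _ fun w => by simp only []; ring)

lemma expansion {g : ℝ → ℝ} (hgc : Continuous g) {C : ℝ}
    (hgb : ∀ w, |g w| ≤ C) (J0 m0 J μ : ℝ)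
    (hJ0 : ∫ w, g w * w ∂(gaussianReal 0 v) = J0 * (v:ℝ))
    (hm0 : ∫ w, g w ∂(gaussianReal 0 v) = m0) :
    ∫ w, (g w - J*w - μ)^2 ∂(gaussianReal 0 v)
      = (∫ w, (g w - J0*w - m0)^2 ∂(gaussianReal 0 v)) + ((J0-J)^2*(v:ℝ) + (m0-μ)^2) := by
  set ρ := gaussianReal 0 v with hρ
  have hprob : IsProbabilityMeasure ρ := by rw [hρ]; infer_instance
  have Iw := gauss_int_id hv
  have Iw2 := gauss_int_sq hv
  have Ig : Integrable g ρ :=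
    Integrable.mono' (integrable_const C) hgc.aestronglyMeasurable
      (ae_of_all _ fun w => by rw [Real.norm_eq_abs]; exact hgb w)
  have Igw : Integrable (fun w => g w * w) ρ :=
    Integrable.mono' (Iw.abs.const_mul C) (hgc.mul continuous_id).aestronglyMeasurable
      (ae_of_all _ fun w => by
        rw [Real.norm_eq_abs, abs_mul]
        exact mul_le_mul_of_nonneg_right (hgb w) (abs_nonneg _))
  have Ig2 : Integrable (fun w => g w ^ 2) ρ :=
    Integrable.mono' (integrable_const (C^2)) (hgc.pow 2).aestronglyMeasurable
      (ae_of_all _ fun w => by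
        rw [Real.norm_eq_abs, abs_pow]
        exact pow_le_pow_left₀ (abs_nonneg _) (hgb w) 2)
  -- integrability of the pieces
  have Ir2 : ∀ p q : ℝ, Integrable (fun w => (g w - p*w - q)^2) ρ := fun p q => by
    have base : Integrable (fun w =>
        g w^2 + (-(2*p))*(g w*w) + (-(2*q))*(g w) + (p^2)*(w^2) + (2*p*q)*w + q^2) ρ :=
      (((((Ig2.add (Igw.const_mul _)).add (Ig.const_mul _)).add (Iw2.const_mul _)).add
        (Iw.const_mul _)).add (integrable_const _))
    exact base.congr (ae_of_all _ fun w => by ring)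
  have Irw : Integrable (fun w => (2*(J0-J)) * ((g w - J0*w - m0)*w)) ρ := by
    have base : Integrable (fun w =>
        (2*(J0-J))*(g w*w) + (-(2*(J0-J))*J0)*(w^2) + (-(2*(J0-J))*m0)*w) ρ :=
      ((Igw.const_mul _).add (Iw2.const_mul _)).add (Iw.const_mul _)
    exact base.congr (ae_of_all _ fun w => by ring)
  have Ir : Integrable (fun w => (2*(m0-μ)) * (g w - J0*w - m0)) ρ := by
    have base : Integrable (fun w =>
        (2*(m0-μ))*(g w) + (-(2*(m0-μ))*J0)*w + (-(2*(m0-μ))*m0)) ρ :=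
      ((Ig.const_mul _).add (Iw.const_mul _)).add (integrable_const _)
    exact base.congr (ae_of_all _ fun w => by ring)
  -- pointwise expansion
  have hpt : ∀ w : ℝ, (g w - J*w - μ)^2
      = (g w - J0*w - m0)^2 + (((J0-J)^2)*(w^2) + ((2*(J0-J)) * ((g w - J0*w - m0)*w)
        + ((2*(m0-μ)) * (g w - J0*w - m0) + ((2*(J0-J)*(m0-μ))*w + (m0-μ)^2)))) :=
    fun w => by ring
  calc ∫ w, (g w - J*w - μ)^2 ∂ρ
      = ∫ w, ((g w - J0*w - m0)^2 + (((J0-J)^2)*(w^2) + ((2*(J0-J)) * ((g w - J0*w - m0)*w)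
        + ((2*(m0-μ)) * (g w - J0*w - m0) + ((2*(J0-J)*(m0-μ))*w + (m0-μ)^2))))) ∂ρ :=
        integral_congr_ae (ae_of_all _ fun w => hpt w)
    _ = (∫ w, (g w - J0*w - m0)^2 ∂ρ) + ((J0-J)^2*(v:ℝ) + (m0-μ)^2) := by
        have S5 : Integrable (fun w : ℝ => (2*(J0-J)*(m0-μ))*w + (m0-μ)^2) ρ :=
          (Iw.const_mul _).add (integrable_const _)
        have S4 : Integrable (fun w => (2*(m0-μ)) * (g w - J0*w - m0)
            + ((2*(J0-J)*(m0-μ))*w + (m0-μ)^2)) ρ := Ir.add S5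
        have S3 : Integrable (fun w => (2*(J0-J)) * ((g w - J0*w - m0)*w)
            + ((2*(m0-μ)) * (g w - J0*w - m0) + ((2*(J0-J)*(m0-μ))*w + (m0-μ)^2))) ρ :=
          Irw.add S4
        have S2 : Integrable (fun w => ((J0-J)^2)*(w^2)
            + ((2*(J0-J)) * ((g w - J0*w - m0)*w)
            + ((2*(m0-μ)) * (g w - J0*w - m0) + ((2*(J0-J)*(m0-μ))*w + (m0-μ)^2)))) ρ :=
          (Iw2.const_mul _).add S3
        rw [integral_add (Ir2 J0 m0) S2, integral_add (Iw2.const_mul _) S3,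
          integral_add Irw S4, integral_add Ir S5,
          integral_add (Iw.const_mul _) (integrable_const _)]
        have e1 : ∫ w, (2*(J0-J)) * ((g w - J0*w - m0)*w) ∂ρ = 0 := by
          rw [integral_const_mul]
          have h3 : ∫ w, (g w - J0*w - m0)*w ∂ρ = 0 := by
            have expand : ∫ w, (g w - J0*w - m0)*w ∂ρ
                = ∫ w, (g w * w - J0*(w^2) - m0*w) ∂ρ :=
              integral_congr_ae (ae_of_all _ fun w => by ring)
            have TW2 : Integrable (fun w : ℝ => J0*(w^2)) ρ := Iw2.const_mul _
            have TW1 : Integrable (fun w : ℝ => m0*w) ρ := Iw.const_mul _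
            have T2 : Integrable (fun w : ℝ => g w * w - J0*(w^2)) ρ := Igw.sub TW2
            rw [expand, integral_sub T2 TW1, integral_sub Igw TW2,
              integral_const_mul, integral_const_mul,
              hJ0, gauss_m2 hv, gauss_m1 hv]
            ring
          rw [h3, mul_zero]
        have e2 : ∫ w, (2*(m0-μ)) * (g w - J0*w - m0) ∂ρ = 0 := by
          rw [integral_const_mul]
          have h3 : ∫ w, (g w - J0*w - m0) ∂ρ = 0 := by
            have TW1 : Integrable (fun w : ℝ => J0*w) ρ := Iw.const_mul _
            have T2 : Integrable (fun w : ℝ => g w - J0*w) ρ := Ig.sub TW1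
            rw [integral_sub T2 (integrable_const m0),
              integral_sub Ig TW1, integral_const_mul, gauss_m1 hv, hm0,
              integral_const]
            simp
          rw [h3, mul_zero]
        rw [e1, e2, integral_const_mul, integral_const_mul, gauss_m1 hv, gauss_m2 hv,
          integral_const]
        simp
        try ring

end moments

/-- for the Gaussian measure `ρ` on `ℝ` with mean `0` and variance
`σ²`, and `f` bounded and Lipschitz, the unique minimizer `(J*, μ*)` of
`F(J, μ) = (1/2) E[(f(x̄+w) - J w - μ)²]` is the exact linearization of the
smooth surrogate: `μ* = f_ρ(x̄)` and `J* = f_ρ'(x̄)`. -/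
theorem best_affine_approximation_is_linearization_of_surrogate
    (σ : NNReal) (hσ : 0 < σ)
    (f : ℝ → ℝ) (C : ℝ) (hfb : ∀ x, |f x| ≤ C) (K : NNReal) (hfl : LipschitzWith K f)
    (xbar : ℝ)
    (F : ℝ → ℝ → ℝ)
    (hF : F = fun J μ =>
      (1 / 2) * ∫ w : ℝ, (f (xbar + w) - J * w - μ) ^ 2 ∂(gaussianReal 0 (σ ^ 2)))
    (fρ : ℝ → ℝ)
    (hfρ : fρ = fun x => ∫ w : ℝ, f (x + w) ∂(gaussianReal 0 (σ ^ 2))) :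
    (∀ J μ, F (deriv fρ xbar) (fρ xbar) ≤ F J μ) ∧
      (∀ J μ, F J μ = F (deriv fρ xbar) (fρ xbar) → J = deriv fρ xbar ∧ μ = fρ xbar) := by
  have hv : (σ^2 : ℝ≥0) ≠ 0 := pow_ne_zero 2 hσ.ne'
  have hvR : 0 < ((σ^2 : ℝ≥0) : ℝ) := NNReal.coe_pos.mpr (pow_pos hσ 2)
  have hD : HasDerivAt fρ
      ((((σ^2 : ℝ≥0) : ℝ))⁻¹ * ∫ w, f (xbar + w) * w ∂(gaussianReal 0 (σ^2))) xbar := by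
    rw [hfρ]
    exact surrogate_hasDerivAt hv hfb hfl.continuous xbar
  have hderiv : deriv fρ xbar
      = (((σ^2 : ℝ≥0) : ℝ))⁻¹ * ∫ w, f (xbar + w) * w ∂(gaussianReal 0 (σ^2)) := hD.deriv
  have hJ0cond : ∫ w, f (xbar + w) * w ∂(gaussianReal 0 (σ^2))
      = (deriv fρ xbar) * ((σ^2 : ℝ≥0) : ℝ) := by
    rw [hderiv]
    field_simp
  have hm0cond : ∫ w, f (xbar + w) ∂(gaussianReal 0 (σ^2)) = fρ xbar := by rw [hfρ]
  have hgc : Continuous fun w : ℝ => f (xbar + w) :=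
    hfl.continuous.comp (continuous_const.add continuous_id)
  have hexp : ∀ J μ, ∫ w, (f (xbar + w) - J*w - μ)^2 ∂(gaussianReal 0 (σ^2))
      = (∫ w, (f (xbar + w) - (deriv fρ xbar)*w - (fρ xbar))^2 ∂(gaussianReal 0 (σ^2)))
        + ((deriv fρ xbar - J)^2 * ((σ^2 : ℝ≥0) : ℝ) + (fρ xbar - μ)^2) :=
    fun J μ => expansion hv hgc (fun w => hfb _) (deriv fρ xbar) (fρ xbar) J μ hJ0cond hm0cond
  have hFeq : ∀ J μ, F J μ = F (deriv fρ xbar) (fρ xbar)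
      + (1/2) * ((deriv fρ xbar - J)^2 * ((σ^2 : ℝ≥0) : ℝ) + (fρ xbar - μ)^2) := by
    intro J μ
    rw [hF]
    simp only []
    rw [hexp J μ]
    have := hexp (deriv fρ xbar) (fρ xbar)
    rw [this]
    ring
  constructor
  · intro J μ
    rw [hFeq J μ]
    have h0 : 0 ≤ (deriv fρ xbar - J)^2 * ((σ^2 : ℝ≥0) : ℝ) + (fρ xbar - μ)^2 := by positivity
    linarith
  · intro J μ hEq
    rw [hFeq J μ] at hEq
    have hX : (deriv fρ xbar - J)^2 * ((σ^2 : ℝ≥0) : ℝ) + (fρ xbar - μ)^2 = 0 := by linarith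
    have hprod : (deriv fρ xbar - J)^2 * ((σ^2 : ℝ≥0) : ℝ) = 0 := by
      nlinarith [sq_nonneg (fρ xbar - μ), mul_nonneg (sq_nonneg (deriv fρ xbar - J)) hvR.le]
    have h1 : (deriv fρ xbar - J)^2 = 0 := (mul_eq_zero.mp hprod).resolve_right hvR.ne'
    have h2 : (fρ xbar - μ)^2 = 0 := by
      nlinarith [mul_nonneg (sq_nonneg (deriv fρ xbar - J)) hvR.le]
    constructor
    · have := (pow_eq_zero_iff two_ne_zero).mp h1
      linarith [sub_eq_zero.mp this]
    · have := (pow_eq_zero_iff two_ne_zero).mp h2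
      linarith [sub_eq_zero.mp this]
end

section
/- Let σ > 0, let ρ be the Gaussian measure on ℝ with mean 0 and variance σ², let f : ℝ → ℝ be bounded and Lipschitz continuous, and let w_1, …, w_N be i.i.d. random variables with law ρ. Then for any constant b ∈ ℝ not depending on the samples, the zeroth-order estimator (1/N) Σ_{i=1}^N (f(x̄ + w_i) - b) · (w_i/σ²) is an unbiased estimator of the derivative of the smooth surrogate: its expectation equals J_ρ(x̄), the derivative at x̄ of f_ρ(x) := ∫ f(x+w) dρ(w). -/
open MeasureTheory ProbabilityTheory Real

lemma zo_transfer_int (σ : NNReal) (hσ : 0 < σ) (g : ℝ → ℝ) :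
    ∫ v, g v ∂(gaussianReal 0 (σ ^ 2)) = ∫ v, gaussianPDFReal 0 (σ ^ 2) v * g v := by
  have hne : (σ ^ 2 : NNReal) ≠ 0 := by positivity
  rw [gaussianReal_of_var_ne_zero 0 hne]
  have : (gaussianPDF 0 (σ ^ 2)) = fun x => ((Real.toNNReal (gaussianPDFReal 0 (σ ^ 2) x) : NNReal) : ENNReal) := by
    ext x; rfl
  rw [this, integral_withDensity_eq_integral_smul
    ((measurable_gaussianPDFReal 0 (σ ^ 2)).real_toNNReal)]
  congr 1
  ext v
  simp [NNReal.smul_def, Real.coe_toNNReal _ (gaussianPDFReal_nonneg 0 (σ ^ 2) v)]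

lemma zo_transfer_integrable (σ : NNReal) (hσ : 0 < σ) (g : ℝ → ℝ) (hg : AEStronglyMeasurable g volume) :
    Integrable g (gaussianReal 0 (σ ^ 2)) ↔
      Integrable (fun v => g v * gaussianPDFReal 0 (σ ^ 2) v) := by
  have hne : (σ ^ 2 : NNReal) ≠ 0 := by positivity
  rw [gaussianReal_of_var_ne_zero 0 hne]
  rw [integrable_withDensity_iff (measurable_gaussianPDF 0 (σ ^ 2))
    (ae_of_all _ fun x => ENNReal.ofReal_lt_top)]
  simp_rw [gaussianPDF, ENNReal.toReal_ofReal (gaussianPDFReal_nonneg 0 (σ ^ 2) _)]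

lemma zo_pdf_eq (σ : NNReal) (v : ℝ) :
    gaussianPDFReal 0 (σ ^ 2) v
      = (√(2 * π * (σ : ℝ) ^ 2))⁻¹ * rexp (-((2 * (σ : ℝ) ^ 2)⁻¹) * v ^ 2) := by
  simp only [gaussianPDFReal, sub_zero, NNReal.coe_pow]
  have : -v ^ 2 / (2 * (σ : ℝ) ^ 2) = -(2 * (σ : ℝ) ^ 2)⁻¹ * v ^ 2 := by ring
  rw [this]

lemma zo_int_mul_pdf (σ : NNReal) (hσ : 0 < σ) :
    Integrable (fun v => v * gaussianPDFReal 0 (σ ^ 2) v) := by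
  have ha : (0:ℝ) < (2 * (σ : ℝ) ^ 2)⁻¹ := by positivity
  have := (integrable_mul_exp_neg_mul_sq ha).const_mul (√(2 * π * (σ : ℝ) ^ 2))⁻¹
  refine this.congr ?_
  filter_upwards with v
  rw [zo_pdf_eq]
  ring

lemma zo_int_abs (σ : NNReal) (hσ : 0 < σ) :
    Integrable (fun v => |v|) (gaussianReal 0 (σ ^ 2)) := by
  rw [zo_transfer_integrable σ hσ _ measurable_abs.aestronglyMeasurable]
  refine (zo_int_mul_pdf σ hσ).abs.congr ?_
  filter_upwards with v
  rw [abs_mul, abs_of_nonneg (gaussianPDFReal_nonneg 0 (σ ^ 2) v)]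

lemma zo_int_id (σ : NNReal) (hσ : 0 < σ) :
    Integrable (fun v => v) (gaussianReal 0 (σ ^ 2)) := by
  rw [zo_transfer_integrable σ hσ (fun v => v) measurable_id.aestronglyMeasurable]
  exact zo_int_mul_pdf σ hσ

lemma zo_mean_zero (σ : NNReal) (hσ : 0 < σ) :
    ∫ v, v ∂(gaussianReal 0 (σ ^ 2)) = 0 := by
  rw [zo_transfer_int σ hσ]
  have h := integral_neg_eq_self (fun v => gaussianPDFReal 0 (σ ^ 2) v * v) volume
  have hsymm : ∀ v : ℝ, gaussianPDFReal 0 (σ ^ 2) (-v) = gaussianPDFReal 0 (σ ^ 2) v := by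
    intro v; simp [gaussianPDFReal, neg_sq]
  simp only [hsymm, mul_neg, integral_neg] at h
  linarith

lemma zo_hasDerivAt_pdf (σ : NNReal) (hσ : 0 < σ) (t : ℝ) :
    HasDerivAt (gaussianPDFReal 0 (σ ^ 2))
      (-(t / (σ : ℝ) ^ 2) * gaussianPDFReal 0 (σ ^ 2) t) t := by
  have hV : (0:ℝ) < (σ : ℝ) ^ 2 := by positivity
  set a : ℝ := (2 * (σ : ℝ) ^ 2)⁻¹ with ha
  have h1 : HasDerivAt (fun t : ℝ => -a * t ^ 2) (-a * (2 * t)) t := by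
    simpa using (hasDerivAt_pow 2 t).const_mul (-a)
  have h2 := ((h1.exp).const_mul (√(2 * π * (σ : ℝ) ^ 2))⁻¹)
  have hfun : (fun t : ℝ => (√(2 * π * (σ : ℝ) ^ 2))⁻¹ * rexp (-a * t ^ 2))
      = gaussianPDFReal 0 (σ ^ 2) := by
    ext t; rw [zo_pdf_eq]
  rw [hfun] at h2
  have hval : -a * (2 * t) = -(t / (σ : ℝ) ^ 2) := by
    rw [ha]; field_simp
  refine h2.congr_deriv ?_
  rw [zo_pdf_eq, hval, ha]
  ring

lemma zo_abs_mul_exp_le {c : ℝ} (hc : 0 < c) (s : ℝ) :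
    |s| * rexp (-(c * s ^ 2)) ≤ (2 * Real.sqrt c)⁻¹ := by
  have hsq : (0:ℝ) < 2 * Real.sqrt c := by positivity
  have h1 : 2 * Real.sqrt c * |s| ≤ 1 + c * s ^ 2 := by
    nlinarith [sq_nonneg (Real.sqrt c * |s| - 1), Real.sq_sqrt hc.le, sq_abs s]
  have h2 : (1 + c * s ^ 2) * rexp (-(c * s ^ 2)) ≤ 1 := by
    rw [Real.exp_neg, ← div_eq_mul_inv, div_le_one (exp_pos _)]
    have := Real.add_one_le_exp (c * s ^ 2); linarith
  have hexp : (0:ℝ) < rexp (-(c * s ^ 2)) := exp_pos _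
  have key : 2 * Real.sqrt c * (|s| * rexp (-(c * s ^ 2))) ≤ 1 := by nlinarith
  rw [inv_eq_one_div, le_div_iff₀ hsq]
  linarith [key]

lemma zo_hasDeriv (σ : NNReal) (hσ : 0 < σ) (f : ℝ → ℝ) (C : ℝ) (hfb : ∀ x, |f x| ≤ C)
    (hfc : Continuous f) (xbar : ℝ) :
    HasDerivAt (fun x => ∫ u, f u * gaussianPDFReal 0 (σ ^ 2) (u - x))
      (∫ u, f u * ((u - xbar) / (σ : ℝ) ^ 2 * gaussianPDFReal 0 (σ ^ 2) (u - xbar))) xbar := by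
  have hV : (0:ℝ) < (σ : ℝ) ^ 2 := by positivity
  set a : ℝ := (2 * (σ : ℝ) ^ 2)⁻¹ with ha
  have hapos : (0:ℝ) < a := by rw [ha]; positivity
  have hC : 0 ≤ C := le_trans (abs_nonneg _) (hfb 0)
  set k : ℝ := (√(2 * π * (σ : ℝ) ^ 2))⁻¹ with hk
  have hkpos : 0 < k := by rw [hk]; positivity
  set φ : ℝ → ℝ := gaussianPDFReal 0 (σ ^ 2) with hφ
  have hφnonneg : ∀ t, 0 ≤ φ t := gaussianPDFReal_nonneg 0 (σ ^ 2)
  have hφeq : ∀ t, φ t = k * rexp (-a * t ^ 2) := fun t => zo_pdf_eq σ t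
  have hφcont : Continuous φ := by
    rw [hφ, gaussianPDFReal_def]
    fun_prop
  set M : ℝ := C * ((σ : ℝ) ^ 2)⁻¹ * k * (2 * Real.sqrt (a / 2))⁻¹ * rexp (a / 2) with hM
  have key := hasDerivAt_integral_of_dominated_loc_of_deriv_le (μ := volume)
    (F := fun x u => f u * φ (u - x))
    (F' := fun x u => f u * ((u - x) / (σ : ℝ) ^ 2 * φ (u - x)))
    (x₀ := xbar) (bound := fun u => M * rexp (-(a / 4) * (u - xbar) ^ 2)) (s := Metric.ball xbar 1)
    (Metric.ball_mem_nhds xbar one_pos)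
    (by
      filter_upwards with x
      exact (hfc.mul (hφcont.comp (continuous_id.sub continuous_const))).aestronglyMeasurable)
    (by
      refine Integrable.mono' (((integrable_gaussianPDFReal 0 (σ ^ 2)).comp_sub_right xbar).const_mul C)
        (hfc.mul (hφcont.comp (continuous_id.sub continuous_const))).aestronglyMeasurable ?_
      filter_upwards with u
      rw [Real.norm_eq_abs, abs_mul, abs_of_nonneg (hφnonneg _)]
      exact mul_le_mul_of_nonneg_right (hfb u) (hφnonneg _))
    (by
      exact (hfc.mul (((continuous_id.sub continuous_const).div_const _).mul
        (hφcont.comp (continuous_id.sub continuous_const)))).aestronglyMeasurable)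
    (by
      filter_upwards with u
      intro x hx
      rw [Metric.mem_ball, Real.dist_eq] at hx
      have hd : |x - xbar| ≤ 1 := hx.le
      have hd2 : (x - xbar) ^ 2 ≤ 1 := by
        have := abs_le.mp hd; nlinarith
      have hs2' : (u - xbar) ^ 2 / 2 - 1 ≤ (u - x) ^ 2 := by
        nlinarith [sq_nonneg ((u - xbar) - 2 * (x - xbar)), hd2]
      set s : ℝ := u - x with hs
      set t : ℝ := u - xbar with ht
      have hs2 : t ^ 2 / 2 - 1 ≤ s ^ 2 := hs2'
      set X : ℝ := rexp (-(a / 4) * t ^ 2) with hX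
      have e1 : |s| * rexp (-(a / 2) * s ^ 2) ≤ (2 * Real.sqrt (a / 2))⁻¹ := by
        have := zo_abs_mul_exp_le (c := a / 2) (by positivity) s
        rw [← neg_mul] at this
        exact this
      have e2 : rexp (-(a / 2) * s ^ 2) ≤ rexp (a / 2) * X := by
        rw [hX, ← Real.exp_add]
        apply Real.exp_le_exp.mpr
        nlinarith [mul_nonneg hapos.le (by linarith : (0:ℝ) ≤ s ^ 2 - t ^ 2 / 2 + 1)]
      have e3 : rexp (-a * s ^ 2) = rexp (-(a / 2) * s ^ 2) * rexp (-(a / 2) * s ^ 2) := by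
        rw [← Real.exp_add]; ring_nf
      have hstep : |s| * rexp (-a * s ^ 2) ≤ (2 * Real.sqrt (a / 2))⁻¹ * (rexp (a / 2) * X) := by
        calc |s| * rexp (-a * s ^ 2)
            = (|s| * rexp (-(a / 2) * s ^ 2)) * rexp (-(a / 2) * s ^ 2) := by rw [e3]; ring
          _ ≤ (2 * Real.sqrt (a / 2))⁻¹ * (rexp (a / 2) * X) :=
              mul_le_mul e1 e2 (exp_pos _).le (by positivity)
      have habs : |s / (σ : ℝ) ^ 2 * φ s| = |s| * rexp (-a * s ^ 2) * (((σ : ℝ) ^ 2)⁻¹ * k) := by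
        rw [abs_mul, abs_div, abs_of_pos hV, abs_of_nonneg (hφnonneg _), hφeq]
        ring
      calc ‖f u * (s / (σ : ℝ) ^ 2 * φ s)‖
          = |f u| * (|s| * rexp (-a * s ^ 2) * (((σ : ℝ) ^ 2)⁻¹ * k)) := by
            rw [Real.norm_eq_abs, abs_mul, habs]
        _ ≤ C * ((2 * Real.sqrt (a / 2))⁻¹ * (rexp (a / 2) * X) * (((σ : ℝ) ^ 2)⁻¹ * k)) := by
            refine mul_le_mul (hfb u) (mul_le_mul_of_nonneg_right hstep (by positivity)) ?_ hC
            positivity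
        _ = M * X := by rw [hM]; ring)
    (by
      refine Integrable.const_mul ?_ M
      exact (integrable_exp_neg_mul_sq (by positivity : (0:ℝ) < a / 4)).comp_sub_right xbar)
    (by
      filter_upwards with u
      intro x hx
      have h1 : HasDerivAt (fun x : ℝ => u - x) (-1) x := by
        simpa using (hasDerivAt_id x).const_sub u
      have h2 := (zo_hasDerivAt_pdf σ hσ (u - x)).comp x h1
      have h3 := h2.const_mul (f u)
      refine h3.congr_deriv ?_
      ring)
  exact key.2

lemma zo_deriv_surrogate (σ : NNReal) (hσ : 0 < σ) (f : ℝ → ℝ) (C : ℝ) (hfb : ∀ x, |f x| ≤ C)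
    (hfc : Continuous f) (xbar : ℝ) :
    deriv (fun x : ℝ => ∫ v : ℝ, f (x + v) ∂(gaussianReal 0 (σ ^ 2))) xbar
      = ∫ v, f (xbar + v) * (v / (σ : ℝ) ^ 2) ∂(gaussianReal 0 (σ ^ 2)) := by
  have heq : (fun x : ℝ => ∫ v : ℝ, f (x + v) ∂(gaussianReal 0 (σ ^ 2)))
      = fun x => ∫ u, f u * gaussianPDFReal 0 (σ ^ 2) (u - x) := by
    ext x
    rw [zo_transfer_int σ hσ,
      ← integral_add_right_eq_self (fun u => f u * gaussianPDFReal 0 (σ ^ 2) (u - x)) x]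
    congr 1; ext v
    rw [add_sub_cancel_right, mul_comm, add_comm x v]
  rw [heq, (zo_hasDeriv σ hσ f C hfb hfc xbar).deriv, zo_transfer_int σ hσ,
    ← integral_add_right_eq_self
      (fun u => f u * ((u - xbar) / (σ : ℝ) ^ 2 * gaussianPDFReal 0 (σ ^ 2) (u - xbar))) xbar]
  congr 1; ext v
  rw [add_sub_cancel_right, add_comm v xbar]
  ring


/-- for the Gaussian measure `ρ` with mean `0` and variance `σ²`,
`f` bounded and Lipschitz, and i.i.d. samples `w_1, …, w_N` with law `ρ`, the
zeroth-order estimator `(1/N) ∑ (f(x̄+w_i) - b) * (w_i/σ²)` is an unbiased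
estimator of the derivative `J_ρ(x̄)` of `f_ρ(x) = ∫ f (x + w) ∂ρ`, for any
baseline `b` not depending on the samples. -/
theorem zeroth_order_randomized_smoothing_unbiased
    (σ : NNReal) (hσ : 0 < σ)
    (f : ℝ → ℝ) (C : ℝ) (hfb : ∀ x, |f x| ≤ C) (K : NNReal) (hfl : LipschitzWith K f)
    (xbar b : ℝ)
    (N : ℕ) (hN : 0 < N)
    (Ω : Type*) [MeasureSpace Ω] [IsProbabilityMeasure (ℙ : Measure Ω)]
    (w : Fin N → Ω → ℝ) (hwmeas : ∀ i, Measurable (w i))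
    (hlaw : ∀ i, Measure.map (w i) ℙ = gaussianReal 0 (σ ^ 2))
    (hindep : iIndepFun w ℙ) :
    ∫ ω, (N : ℝ)⁻¹ * ∑ i : Fin N, (f (xbar + w i ω) - b) * (w i ω / (σ : ℝ) ^ 2)
        ∂(ℙ : Measure Ω)
      = deriv (fun x : ℝ => ∫ v : ℝ, f (x + v) ∂(gaussianReal 0 (σ ^ 2))) xbar := by
  have hfc : Continuous f := hfl.continuous
  have hV : (0:ℝ) < (σ : ℝ) ^ 2 := by positivity
  have hC : 0 ≤ C := le_trans (abs_nonneg _) (hfb 0)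
  set γ := gaussianReal 0 (σ ^ 2) with hγ
  set g : ℝ → ℝ := fun v => (f (xbar + v) - b) * (v / (σ : ℝ) ^ 2) with hg
  have hgcont : Continuous g := by fun_prop
  have hgintγ : Integrable g γ := by
    refine Integrable.mono' ((zo_int_abs σ hσ).const_mul ((C + |b|) / (σ : ℝ) ^ 2))
      hgcont.aestronglyMeasurable ?_
    filter_upwards with v
    have hfbd : |f (xbar + v) - b| ≤ C + |b| := by
      rw [sub_eq_add_neg]
      exact (abs_add_le _ _).trans (by rw [abs_neg]; linarith [hfb (xbar + v)])
    calc ‖g v‖ = |f (xbar + v) - b| * (|v| / (σ : ℝ) ^ 2) := by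
          rw [hg, Real.norm_eq_abs, abs_mul, abs_div, abs_of_pos hV]
      _ ≤ (C + |b|) * (|v| / (σ : ℝ) ^ 2) :=
          mul_le_mul_of_nonneg_right hfbd (by positivity)
      _ = (C + |b|) / (σ : ℝ) ^ 2 * |v| := by ring
  have hgint_i : ∀ i, Integrable (fun ω => g (w i ω)) ℙ := by
    intro i
    have h := (integrable_map_measure hgcont.aestronglyMeasurable
      (hwmeas i).aemeasurable).mp (by rw [hlaw i]; exact hgintγ)
    exact h
  have hval_i : ∀ i, ∫ ω, g (w i ω) ∂ℙ = ∫ v, g v ∂γ := by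
    intro i
    rw [← hlaw i]
    exact (integral_map (hwmeas i).aemeasurable hgcont.aestronglyMeasurable).symm
  have h1 : Integrable (fun v => f (xbar + v) * (v / (σ : ℝ) ^ 2)) γ := by
    refine Integrable.mono' ((zo_int_abs σ hσ).const_mul (C / (σ : ℝ) ^ 2))
      (by fun_prop : Continuous fun v => f (xbar + v) * (v / (σ : ℝ) ^ 2)).aestronglyMeasurable ?_
    filter_upwards with v
    calc ‖f (xbar + v) * (v / (σ : ℝ) ^ 2)‖ = |f (xbar + v)| * (|v| / (σ : ℝ) ^ 2) := by
          rw [Real.norm_eq_abs, abs_mul, abs_div, abs_of_pos hV]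
      _ ≤ C * (|v| / (σ : ℝ) ^ 2) := mul_le_mul_of_nonneg_right (hfb _) (by positivity)
      _ = C / (σ : ℝ) ^ 2 * |v| := by ring
  have h2 : Integrable (fun v => b / (σ : ℝ) ^ 2 * v) γ :=
    (zo_int_id σ hσ).const_mul _
  have hI : ∫ v, g v ∂γ = ∫ v, f (xbar + v) * (v / (σ : ℝ) ^ 2) ∂γ := by
    have hgsplit : ∀ v, g v = f (xbar + v) * (v / (σ : ℝ) ^ 2) - b / (σ : ℝ) ^ 2 * v := by
      intro v; rw [hg]; ring
    rw [show (fun v => g v) = fun v => f (xbar + v) * (v / (σ : ℝ) ^ 2) - b / (σ : ℝ) ^ 2 * v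
      from funext hgsplit]
    rw [integral_sub h1 h2, integral_const_mul, zo_mean_zero σ hσ]
    ring
  calc ∫ ω, (N : ℝ)⁻¹ * ∑ i : Fin N, (f (xbar + w i ω) - b) * (w i ω / (σ : ℝ) ^ 2) ∂ℙ
      = (N : ℝ)⁻¹ * ∫ ω, ∑ i : Fin N, g (w i ω) ∂ℙ := by rw [integral_const_mul]
    _ = (N : ℝ)⁻¹ * ∑ i : Fin N, ∫ ω, g (w i ω) ∂ℙ := by
        rw [integral_finset_sum Finset.univ (fun i _ => hgint_i i)]
    _ = (N : ℝ)⁻¹ * ∑ _i : Fin N, ∫ v, g v ∂γ := by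
        congr 1; exact Finset.sum_congr rfl fun i _ => hval_i i
    _ = ∫ v, g v ∂γ := by
        rw [Finset.sum_const, Finset.card_univ, Fintype.card_fin, nsmul_eq_mul]
        field_simp
    _ = deriv (fun x : ℝ => ∫ v : ℝ, f (x + v) ∂(gaussianReal 0 (σ ^ 2))) xbar := by
        rw [hI, zo_deriv_surrogate σ hσ f C hfb hfc xbar]
end

section
/- Let σ > 0 and let ρ be the Gaussian measure on ℝ with mean 0 and variance σ². Then the smooth surrogate f_ρ(q) := ∫ max(q + w, 0) dρ(w) of the projection dynamics f(q) = max(q, 0) is differentiable at every q ∈ ℝ, with derivative f_ρ'(q) = ρ((-q, ∞)), the Gaussian probability of the event {w > -q}; in particular 0 < f_ρ'(q) < 1 for all q. -/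
open MeasureTheory ProbabilityTheory Real

lemma integrable_id_gaussianReal' (v : NNReal) (hv : v ≠ 0) :
    Integrable (fun w : ℝ => w) (gaussianReal 0 v) := by
  rw [gaussianReal_of_var_ne_zero _ hv]
  rw [integrable_withDensity_iff (measurable_gaussianPDF 0 v)
    (Filter.Eventually.of_forall fun x => ENNReal.ofReal_lt_top)]
  have hv' : (0:ℝ) < (v:ℝ) := by exact_mod_cast hv.bot_lt
  have hb : (0:ℝ) < (2 * (v:ℝ))⁻¹ := by positivity
  have h := (integrable_mul_exp_neg_mul_sq hb).const_mul (√(2 * π * v))⁻¹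
  refine h.congr (Filter.Eventually.of_forall fun x => ?_)
  simp only [gaussianPDF, gaussianPDFReal]
  rw [ENNReal.toReal_ofReal (by positivity)]
  rw [show -(2 * (v:ℝ))⁻¹ * x ^ 2 = -(x - 0)^2 / (2 * v) by rw [sub_zero]; ring]
  ring

/-- for the Gaussian measure `ρ` with mean `0` and variance `σ²`,
the smooth surrogate `f_ρ(q) = ∫ max (q + w) 0 ∂ρ` of the projection dynamics
`f(q) = max q 0` is differentiable everywhere with derivative
`f_ρ'(q) = ρ((-q, ∞))`, and `0 < f_ρ'(q) < 1` for all `q`. -/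
theorem smooth_surrogate_projection_dynamics_gaussian
    (σ : NNReal) (hσ : 0 < σ) (q : ℝ) :
    HasDerivAt (fun x : ℝ => ∫ w : ℝ, max (x + w) 0 ∂(gaussianReal 0 (σ ^ 2)))
        ((gaussianReal 0 (σ ^ 2) (Set.Ioi (-q))).toReal) q ∧
      0 < (gaussianReal 0 (σ ^ 2) (Set.Ioi (-q))).toReal ∧
      (gaussianReal 0 (σ ^ 2) (Set.Ioi (-q))).toReal < 1 := by
  set v : NNReal := σ ^ 2 with hv_def
  have hv : v ≠ 0 := by
    simp [hv_def, pow_eq_zero_iff]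
    exact hσ.ne'
  set ρ := gaussianReal 0 v with hρ
  have hac : ρ ≪ volume := gaussianReal_absolutelyContinuous 0 hv
  have hac' : volume ≪ ρ := gaussianReal_absolutelyContinuous' 0 hv
  have hprob : IsProbabilityMeasure ρ := by infer_instance
  set F' : ℝ → ℝ := Set.indicator (Set.Ioi (-q)) 1 with hF'
  have hder : HasDerivAt (fun x : ℝ => ∫ w : ℝ, max (x + w) 0 ∂ρ) (∫ w, F' w ∂ρ) q := by
    have h := hasDerivAt_integral_of_dominated_loc_of_lip (F := fun x w => max (x + w) 0)
      (F' := F') (bound := fun _ => (1:ℝ)) (μ := ρ) (x₀ := q) (s := Metric.ball q 1) (Metric.ball_mem_nhds q one_pos)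
      ?_ ?_ ?_ ?_ ?_ ?_
    · exact h.2
    · exact Filter.Eventually.of_forall fun x =>
        (Continuous.max (continuous_const.add continuous_id) continuous_const).aestronglyMeasurable
    · -- integrability of F q
      have hint : Integrable (fun w : ℝ => |q| + |w|) ρ :=
        (integrable_const |q|).add (integrable_id_gaussianReal' v hv).abs
      refine hint.mono ?_ (Filter.Eventually.of_forall fun w => ?_)
      · exact (Continuous.max (continuous_const.add continuous_id) continuous_const).aestronglyMeasurable
      · calc ‖max (q + w) 0‖ ≤ |q + w| := by
              simp only [Real.norm_eq_abs]
              rcases le_total (q+w) 0 with h | h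
              · simp [max_eq_right h, abs_nonneg]
              · rw [max_eq_left h]
            _ ≤ |q| + |w| := abs_add_le q w
            _ ≤ ‖|q| + |w|‖ := le_abs_self _
    · exact ((measurable_const.indicator measurableSet_Ioi)).aestronglyMeasurable
    · refine Filter.Eventually.of_forall fun w => ?_
      have h1 : LipschitzWith 1 (fun x : ℝ => x + w) := by
        refine LipschitzWith.of_dist_le_mul fun a b => ?_
        simp [Real.dist_eq]
      have h2 : LipschitzWith 1 (fun x : ℝ => max (x + w) 0) := by
        simpa [Function.comp_def] using MeasureTheory.Lp.lipschitzWith_pos_part.comp h1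
      have h3 : LipschitzOnWith 1 (fun x : ℝ => max (x + w) 0) (Metric.ball q 1) :=
        h2.lipschitzOnWith
      have : Real.nnabs 1 = 1 := by simp
      rw [this]
      exact h3
    · exact integrable_const 1
    · -- a.e. differentiability
      have hnull : ρ {-q} = 0 := hac (measure_singleton _)
      rw [MeasureTheory.ae_iff]
      refine measure_mono_null (fun w hw => ?_) hnull
      simp only [Set.mem_setOf_eq] at hw
      by_contra hne
      apply hw
      simp only [Set.mem_singleton_iff] at hne
      rcases lt_or_gt_of_ne (fun h : w = -q => hne h) with h | h
      · have hF'w : F' w = 0 := by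
          simp [hF', Set.indicator_of_notMem, h.not_gt]
        rw [hF'w]
        have heq : (fun x : ℝ => max (x + w) 0) =ᶠ[nhds q] fun _ => 0 := by
          have hopen : Set.Iio (-w) ∈ nhds q := Iio_mem_nhds (by linarith)
          filter_upwards [hopen] with x hx
          have : x + w < 0 := by simp only [Set.mem_Iio] at hx; linarith
          simp [max_eq_right this.le]
        exact (hasDerivAt_const q (0:ℝ)).congr_of_eventuallyEq heq
      · have hF'w : F' w = 1 := by simp [hF', Set.indicator_of_mem, h]
        rw [hF'w]
        have heq : (fun x : ℝ => max (x + w) 0) =ᶠ[nhds q] fun x => x + w := by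
          have hopen : Set.Ioi (-w) ∈ nhds q := Ioi_mem_nhds (by linarith)
          filter_upwards [hopen] with x hx
          have : 0 < x + w := by simp only [Set.mem_Ioi] at hx; linarith
          simp [max_eq_left this.le]
        exact ((hasDerivAt_id q).add_const w).congr_of_eventuallyEq heq
  have hint_eq : ∫ w, F' w ∂ρ = (ρ (Set.Ioi (-q))).toReal := by
    rw [hF', MeasureTheory.integral_indicator_one measurableSet_Ioi]
    rfl
  have hIoi_pos : ρ (Set.Ioi (-q)) ≠ 0 := by
    intro h0
    have := hac' h0
    simp [Real.volume_Ioi] at this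
  have hIic_pos : ρ (Set.Iic (-q)) ≠ 0 := by
    intro h0
    have := hac' h0
    rw [Real.volume_Iic] at this
    simp at this
  have hne_top : ρ (Set.Ioi (-q)) ≠ ⊤ := measure_ne_top ρ _
  have hle_one : ρ (Set.Ioi (-q)) ≤ 1 := prob_le_one
  have hne_one : ρ (Set.Ioi (-q)) ≠ 1 := by
    intro h1
    apply hIic_pos
    have hc : ρ (Set.Ioi (-q))ᶜ = 1 - ρ (Set.Ioi (-q)) :=
      prob_compl_eq_one_sub measurableSet_Ioi
    rw [Set.compl_Ioi] at hc
    rw [hc, h1, tsub_self]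
  refine ⟨hint_eq ▸ hder, ?_, ?_⟩
  · exact ENNReal.toReal_pos hIoi_pos hne_top
  · have hlt : ρ (Set.Ioi (-q)) < 1 := lt_of_le_of_ne hle_one hne_one
    have := (ENNReal.toReal_lt_toReal hne_top (by simp : (1:ENNReal) ≠ ⊤)).mpr hlt
    simpa using this
end

section
/- (Convergence of the barrier-smoothed dynamics to the exact dynamics) Let h > 0, k > 0 and u ∈ ℝ, and for κ > 0 define s(κ) := (1/2)(u + √(u² + 4/(κ h k))). Then s(κ) → max(u, 0) as κ → ∞; that is, the solution of the log-barrier-smoothed 1D cart-wall dynamics converges to the solution of the exact (non-smooth) contact dynamics as the barrier weight tends to infinity. -/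
open Filter

/-- convergence of the barrier-smoothed dynamics to the exact
dynamics: for `h, k > 0` and `u ∈ ℝ`,
`s(κ) = (1/2)(u + √(u² + 4/(κ h k))) → max u 0` as `κ → ∞`. -/
theorem cart_wall_barrier_converges_to_exact (h k u : ℝ) (hh : 0 < h) (hk : 0 < k) :
    Tendsto (fun κ : ℝ => (1 / 2) * (u + Real.sqrt (u ^ 2 + 4 / (κ * h * k))))
      atTop (nhds (max u 0)) := by
  have hd : Tendsto (fun κ : ℝ => κ * h * k) atTop atTop := by
    have := Tendsto.atTop_mul_const (mul_pos hh hk) (tendsto_id (α := ℝ))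
    simpa [mul_assoc] using this
  have h0 : Tendsto (fun κ : ℝ => 4 / (κ * h * k)) atTop (nhds 0) :=
    Tendsto.div_atTop tendsto_const_nhds hd
  have h1 : Tendsto (fun κ : ℝ => u ^ 2 + 4 / (κ * h * k)) atTop (nhds (u ^ 2)) := by
    simpa using tendsto_const_nhds.add h0
  have h2 : Tendsto (fun κ : ℝ => Real.sqrt (u ^ 2 + 4 / (κ * h * k))) atTop
      (nhds (|u|)) := by
    have := (Real.continuous_sqrt.tendsto (u ^ 2)).comp h1
    simpa [Real.sqrt_sq_eq_abs, Function.comp_def] using this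
  have h3 : (1 / 2 : ℝ) * (u + |u|) = max u 0 := by
    rcases le_total u 0 with hu | hu
    · rw [abs_of_nonpos hu, max_eq_right hu]; ring
    · rw [abs_of_nonneg hu, max_eq_left hu]; ring
  have := ((tendsto_const_nhds (x := u)).add h2).const_mul (1 / 2 : ℝ)
  rw [h3] at this
  exact this
end

section
/- (Equivalence of analytic and randomized smoothing for the 1D cart-wall system) Let σ > 0 and u ∈ ℝ, and define the elliptical density ρ(w) := 2√σ · (σ w² + 4)^{-3/2} on ℝ. Then randomized smoothing of the exact dynamics f(u) = max(u, 0) under ρ reproduces the analytic log-barrier-smoothed dynamics: ∫_ℝ max(u + w, 0) · ρ(w) dw = (1/2)(u + √(u² + 4/σ)). -/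
open MeasureTheory Real Filter Topology Set

/-- equivalence of analytic and randomized smoothing for the 1D
cart-wall system: for `σ > 0` and the elliptical density
`ρ(w) = 2√σ (σ w² + 4)^(-3/2)`, randomized smoothing of `f(u) = max u 0` under
`ρ` reproduces the analytic log-barrier-smoothed dynamics:
`∫ max (u + w) 0 * ρ(w) dw = (1/2)(u + √(u² + 4/σ))`. -/
theorem randomized_smoothing_equals_analytic_smoothing_cart_wall
    (σ u : ℝ) (hσ : 0 < σ) :
    ∫ w : ℝ, max (u + w) 0 * (2 * Real.sqrt σ * (σ * w ^ 2 + 4) ^ (-(3 : ℝ) / 2))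
      = (1 / 2) * (u + Real.sqrt (u ^ 2 + 4 / σ)) := by
  have hσ' : σ ≠ 0 := hσ.ne'
  have hs : (0:ℝ) < Real.sqrt σ := Real.sqrt_pos.2 hσ
  have h4 : ∀ w : ℝ, (0:ℝ) < σ * w ^ 2 + 4 := fun w => by positivity
  set F : ℝ → ℝ := fun w => 2 * Real.sqrt σ * (u * w / 4 - 1 / σ) * (σ * w ^ 2 + 4) ^ (-(1:ℝ)/2) with hF
  -- derivative of F everywhere
  have hderiv : ∀ w : ℝ, HasDerivAt F
      (2 * Real.sqrt σ * (u + w) * (σ * w ^ 2 + 4) ^ (-(3:ℝ)/2)) w := by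
    intro w
    have hg : HasDerivAt (fun w : ℝ => σ * w ^ 2 + 4) (σ * (2 * w)) w := by
      simpa using ((hasDerivAt_pow 2 w).const_mul σ).add_const 4
    have hr : HasDerivAt (fun w : ℝ => (σ * w ^ 2 + 4) ^ (-(1:ℝ)/2))
        (σ * (2 * w) * (-(1:ℝ)/2) * (σ * w ^ 2 + 4) ^ ((-(1:ℝ)/2) - 1)) w :=
      hg.rpow_const (Or.inl (h4 w).ne')
    have hl : HasDerivAt (fun w : ℝ => 2 * Real.sqrt σ * (u * w / 4 - 1 / σ))
        (2 * Real.sqrt σ * (u / 4)) w := by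
      simpa using (((hasDerivAt_id w).const_mul u).div_const 4 |>.sub_const (1/σ)).const_mul
        (2 * Real.sqrt σ)
    have := hl.mul hr
    refine this.congr_deriv ?_
    have e1 : ((-(1:ℝ)/2) - 1) = (-(3:ℝ)/2) := by norm_num
    have e2 : (σ * w ^ 2 + 4) ^ (-(1:ℝ)/2)
        = (σ * w ^ 2 + 4) * (σ * w ^ 2 + 4) ^ (-(3:ℝ)/2) := by
      rw [← Real.rpow_one_add' (h4 w).le (by norm_num)]
      norm_num
    rw [e1, e2]
    field_simp
    ring
  -- limit of F at infinity
  have hlim : Tendsto F atTop (𝓝 (u / 2)) := by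
    have h2 : Tendsto (fun w : ℝ => σ + 4 / w ^ 2) atTop (𝓝 σ) := by
      have : Tendsto (fun w : ℝ => 4 / w ^ 2) atTop (𝓝 0) :=
        tendsto_const_nhds.div_atTop (tendsto_pow_atTop two_ne_zero)
      simpa using tendsto_const_nhds.add this
    have h3 : Tendsto (fun w : ℝ => (σ + 4 / w ^ 2) ^ (-(1:ℝ)/2)) atTop
        (𝓝 (σ ^ (-(1:ℝ)/2))) :=
      ((Real.continuousAt_rpow_const σ _ (Or.inl hσ')).tendsto).comp h2
    have hG : Tendsto (fun w : ℝ => 2 * Real.sqrt σ * (u / 4 - 1 / (σ * w))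
        * (σ + 4 / w ^ 2) ^ (-(1:ℝ)/2)) atTop
        (𝓝 (2 * Real.sqrt σ * (u / 4 - 0) * σ ^ (-(1:ℝ)/2))) := by
      refine Tendsto.mul ?_ h3
      refine tendsto_const_nhds.mul ?_
      refine tendsto_const_nhds.sub ?_
      have : Tendsto (fun w : ℝ => σ * w) atTop atTop := by
        exact (tendsto_id.const_mul_atTop hσ)
      have h0 := this.inv_tendsto_atTop
      refine h0.congr (fun w => ?_)
      rw [one_div]
      rfl
    have hval : 2 * Real.sqrt σ * (u / 4 - 0) * σ ^ (-(1:ℝ)/2) = u / 2 := by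
      have : σ ^ (-(1:ℝ)/2) = (Real.sqrt σ)⁻¹ := by
        rw [show (-(1:ℝ)/2) = -(1/2:ℝ) by norm_num, Real.rpow_neg hσ.le,
          ← Real.sqrt_eq_rpow]
      rw [this]
      field_simp
      ring
    rw [← hval] at *
    refine hG.congr' ?_
    filter_upwards [eventually_gt_atTop (0:ℝ)] with w hw
    have hw2 : (σ + 4 / w ^ 2) = (σ * w ^ 2 + 4) / w ^ 2 := by
      field_simp
    have hw3 : (σ + 4 / w ^ 2) ^ (-(1:ℝ)/2)
        = w * (σ * w ^ 2 + 4) ^ (-(1:ℝ)/2) := by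
      rw [hw2, Real.div_rpow (h4 w).le (by positivity)]
      have : ((w:ℝ) ^ 2) ^ (-(1:ℝ)/2) = w⁻¹ := by
        rw [show (-(1:ℝ)/2) = -(1/2:ℝ) by norm_num, Real.rpow_neg (by positivity),
          ← Real.sqrt_eq_rpow, Real.sqrt_sq hw.le]
      rw [this, div_inv_eq_mul, mul_comm]
    rw [hw3, hF]
    simp only
    field_simp
  -- reduce integral to Ioi (-u)
  have hzero : ∀ w : ℝ, w ∉ Ioi (-u) →
      max (u + w) 0 * (2 * Real.sqrt σ * (σ * w ^ 2 + 4) ^ (-(3:ℝ)/2)) = 0 := by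
    intro w hw
    simp only [mem_Ioi, not_lt] at hw
    have : max (u + w) 0 = 0 := max_eq_right (by linarith)
    rw [this, zero_mul]
  rw [← setIntegral_eq_integral_of_forall_compl_eq_zero hzero]
  have hcongr : ∫ w in Ioi (-u), max (u + w) 0 * (2 * Real.sqrt σ * (σ * w ^ 2 + 4) ^ (-(3:ℝ)/2))
      = ∫ w in Ioi (-u), 2 * Real.sqrt σ * (u + w) * (σ * w ^ 2 + 4) ^ (-(3:ℝ)/2) := by
    refine setIntegral_congr_fun measurableSet_Ioi fun w hw => ?_
    have : max (u + w) 0 = u + w := max_eq_left (by simp only [mem_Ioi] at hw; linarith)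
    rw [this]; ring
  rw [hcongr]
  rw [integral_Ioi_of_hasDerivAt_of_nonneg' (fun x _ => hderiv x)
    (fun x hx => by
      have : (0:ℝ) ≤ u + x := by simp only [mem_Ioi] at hx; linarith
      positivity) hlim]
  -- final algebra
  have hFu : F (-u) = - (Real.sqrt (u ^ 2 + 4 / σ) / 2) := by
    have hbase : σ * (-u) ^ 2 + 4 = σ * u ^ 2 + 4 := by ring
    have hA : (0:ℝ) < σ * u ^ 2 + 4 := by positivity
    have e1 : (σ * u ^ 2 + 4 : ℝ) ^ (-(1:ℝ)/2) = (Real.sqrt (σ * u ^ 2 + 4))⁻¹ := by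
      rw [show (-(1:ℝ)/2) = -(1/2:ℝ) by norm_num, Real.rpow_neg hA.le, ← Real.sqrt_eq_rpow]
    have e2 : Real.sqrt (u ^ 2 + 4 / σ) = Real.sqrt (σ * u ^ 2 + 4) / Real.sqrt σ := by
      rw [show u ^ 2 + 4 / σ = (σ * u ^ 2 + 4) / σ by field_simp, Real.sqrt_div hA.le]
    have hA0 : (0:ℝ) < Real.sqrt (σ * u ^ 2 + 4) := Real.sqrt_pos.2 hA
    have haa : Real.sqrt (σ * u ^ 2 + 4) * Real.sqrt (σ * u ^ 2 + 4) = σ * u ^ 2 + 4 :=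
      Real.mul_self_sqrt hA.le
    have hss : Real.sqrt σ * Real.sqrt σ = σ := Real.mul_self_sqrt hσ.le
    rw [hF]
    simp only [hbase]
    rw [e1, e2]
    field_simp
    nlinarith [haa, hss, hA0, hs, Real.sq_sqrt hσ.le, Real.sq_sqrt hA.le,
      Real.sq_sqrt (show (0:ℝ) ≤ u ^ 2 * σ + 4 by positivity)]
  rw [hFu]
  ring
end

section
/- (Smooth surrogate of ReLU under the logistic distribution is Softplus) For every x ∈ ℝ, ∫_ℝ max(x + w, 0) · e^{-w}/(1 + e^{-w})² dw = log(1 + eˣ). -/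
open MeasureTheory Real

/-- the smooth surrogate of ReLU under the standard logistic
distribution is the softplus function:
`∫ max (x + w) 0 * e^(-w)/(1 + e^(-w))² dw = log (1 + eˣ)`. -/
theorem relu_logistic_surrogate_is_softplus (x : ℝ) :
    ∫ w : ℝ, max (x + w) 0 * (Real.exp (-w) / (1 + Real.exp (-w)) ^ 2)
      = Real.log (1 + Real.exp x) := by
  have hpos : ∀ w : ℝ, 0 < 1 + Real.exp (-w) := fun w => by positivity
  set F : ℝ → ℝ := fun w => (x + w) / (1 + Real.exp (-w)) - w
      - Real.log (1 + Real.exp (-w)) with hFdef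
  -- reduce to integral over Ioi (-x)
  have h0 : ∀ w ∉ Set.Ioi (-x),
      max (x + w) 0 * (Real.exp (-w) / (1 + Real.exp (-w)) ^ 2) = 0 := by
    intro w hw
    simp only [Set.mem_Ioi, not_lt] at hw
    have : max (x + w) 0 = 0 := max_eq_right (by linarith)
    rw [this, zero_mul]
  rw [← setIntegral_eq_integral_of_forall_compl_eq_zero h0]
  have hcongr : Set.EqOn (fun w => max (x + w) 0 * (Real.exp (-w) / (1 + Real.exp (-w)) ^ 2))
      (fun w => (x + w) * (Real.exp (-w) / (1 + Real.exp (-w)) ^ 2)) (Set.Ioi (-x)) := by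
    intro w hw
    simp only [Set.mem_Ioi] at hw
    simp only [max_eq_left (by linarith : (0:ℝ) ≤ x + w)]
  rw [setIntegral_congr_fun measurableSet_Ioi hcongr]
  -- derivative
  have hderiv : ∀ w : ℝ,
      HasDerivAt F ((x + w) * (Real.exp (-w) / (1 + Real.exp (-w)) ^ 2)) w := by
    intro w
    have he : HasDerivAt (fun w : ℝ => Real.exp (-w)) (-Real.exp (-w)) w := by
      have := (Real.hasDerivAt_exp (-w)).comp w (hasDerivAt_neg w)
      simp only [mul_neg, mul_one] at this
      exact this
    have hden : HasDerivAt (fun w : ℝ => 1 + Real.exp (-w)) (-Real.exp (-w)) w := by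
      have := (hasDerivAt_const w (1:ℝ)).add he
      rw [zero_add] at this
      exact this
    have hnum : HasDerivAt (fun w : ℝ => x + w) 1 w := by
      have := (hasDerivAt_const w x).add (hasDerivAt_id w)
      rw [zero_add] at this
      exact this
    have hdiv := hnum.div hden (ne_of_gt (hpos w))
    have hlog := hden.log (ne_of_gt (hpos w))
    have := (hdiv.sub (hasDerivAt_id w)).sub hlog
    refine this.congr_deriv ?_
    have h1 : (1 + Real.exp (-w)) ≠ 0 := ne_of_gt (hpos w)
    field_simp
    ring
  -- nonneg
  have hnonneg : ∀ w ∈ Set.Ioi (-x),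
      0 ≤ (x + w) * (Real.exp (-w) / (1 + Real.exp (-w)) ^ 2) := by
    intro w hw
    simp only [Set.mem_Ioi] at hw
    have : (0:ℝ) ≤ x + w := by linarith
    positivity
  -- limit at top
  have hlim : Filter.Tendsto F Filter.atTop (nhds x) := by
    have hFeq : F = fun w => (x - w * Real.exp (-w)) / (1 + Real.exp (-w))
        - Real.log (1 + Real.exp (-w)) := by
      funext w
      have h1 : (1 + Real.exp (-w)) ≠ 0 := ne_of_gt (hpos w)
      simp only [hFdef]
      field_simp
      ring
    rw [hFeq]
    have hexp : Filter.Tendsto (fun w : ℝ => Real.exp (-w)) Filter.atTop (nhds 0) := by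
      simpa using Real.tendsto_exp_neg_atTop_nhds_zero
    have hwe : Filter.Tendsto (fun w : ℝ => w * Real.exp (-w)) Filter.atTop (nhds 0) := by
      simpa using tendsto_pow_mul_exp_neg_atTop_nhds_zero 1
    have hd : Filter.Tendsto (fun w : ℝ => 1 + Real.exp (-w)) Filter.atTop (nhds 1) := by
      simpa using tendsto_const_nhds.add hexp
    have h1 : Filter.Tendsto (fun w : ℝ => (x - w * Real.exp (-w)) / (1 + Real.exp (-w)))
        Filter.atTop (nhds x) := by
      have := ((tendsto_const_nhds (x := x)).sub hwe).div hd one_ne_zero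
      rw [sub_zero, div_one] at this
      exact this
    have h2 : Filter.Tendsto (fun w : ℝ => Real.log (1 + Real.exp (-w)))
        Filter.atTop (nhds 0) := by
      have := (Real.continuousAt_log (x := (1:ℝ)) one_ne_zero).tendsto.comp hd
      rw [Real.log_one] at this
      exact this
    simpa using h1.sub h2
  rw [integral_Ioi_of_hasDerivAt_of_nonneg' (fun w _ => hderiv w) hnonneg hlim]
  -- compute x - F (-x) = log (1 + exp x)
  have hFx : F (-x) = x - Real.log (1 + Real.exp x) := by
    simp only [hFdef, neg_neg, add_neg_cancel, zero_div]
    ring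
  rw [hFx]
  ring
end
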